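/- arXiv:2008.10062 — 2 statements merged into one kernel-verified Lean document; each statement's English description precedes it below -/
import Mathlib

section
/- If B is a random subset of a finite set N containing every element of N with probability at most q (not necessarily independently), and h : 2^N → ℝ_{≥0} is a non-negative submodular function, then E[h(B)] ≥ (1 − q)·h(∅). -/
/-- Lemma 2.2 of Buchbinder–Feldman–Naor–Schwartz (2014): if `B` is a random
subset of `N` containing each element with probability at most `q`, and `h` is
a non-negative submodular function, then `E[h(B)] ≥ (1 − q) · h(∅)`.
The random subset is modeled by a finite probability space `(Ω, p)`. -/
theorem stmt4 {N : Type*} [Fintype N] [DecidableEq N]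
    {Ω : Type*} [Fintype Ω] (p : Ω → ℝ)
    (hp : ∀ ω, 0 ≤ p ω) (hp1 : ∑ ω, p ω = 1)
    (B : Ω → Finset N) (q : ℝ) (hq0 : 0 ≤ q) (hq1 : q ≤ 1)
    (hmarg : ∀ x : N, ∑ ω ∈ Finset.univ.filter (fun ω => x ∈ B ω), p ω ≤ q)
    (h : Finset N → ℝ)
    (hnonneg : ∀ S : Finset N, 0 ≤ h S)
    (hsub : ∀ A C : Finset N, h A + h C ≥ h (A ∪ C) + h (A ∩ C)) :
    ∑ ω, p ω * h (B ω) ≥ (1 - q) * h ∅ := by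
  classical
  -- expected value of a weight function w under a measure μ on Finset N
  set f : (Finset N → ℝ) → ℝ := fun μ => ∑ S : Finset N, μ S * h S with hf
  set g : (Finset N → ℝ) → ℝ := fun μ => ∑ S : Finset N, μ S * ((S.card : ℝ))^2 with hg
  set K : Set (Finset N → ℝ) :=
    {μ | (∀ S, 0 ≤ μ S) ∧ (∑ S : Finset N, μ S = 1) ∧
      (∀ x : N, ∑ S : Finset N, μ S * (if x ∈ S then (1:ℝ) else 0) ≤ q)} with hK
  set μ0 : Finset N → ℝ := fun S => ∑ ω ∈ Finset.univ.filter (fun ω => B ω = S), p ω with hμ0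
  -- fiberwise identity
  have fib : ∀ w : Finset N → ℝ, ∑ S : Finset N, μ0 S * w S = ∑ ω, p ω * w (B ω) := by
    intro w
    have e1 : ∀ S : Finset N, μ0 S * w S
        = ∑ ω ∈ Finset.univ.filter (fun ω => B ω = S), p ω * w (B ω) := by
      intro S
      rw [hμ0]
      rw [Finset.sum_mul]
      refine Finset.sum_congr rfl ?_
      intro ω hω
      simp only [Finset.mem_filter] at hω
      rw [hω.2]
    simp_rw [e1]
    exact Finset.sum_fiberwise _ _ _
  have hμ0K : μ0 ∈ K := by
    refine ⟨fun S => Finset.sum_nonneg fun ω _ => hp ω, ?_, ?_⟩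
    · have := fib (fun _ => (1:ℝ))
      simp only [mul_one] at this
      rw [this, hp1]
    · intro x
      have e2 := fib (fun S => if x ∈ S then (1:ℝ) else 0)
      rw [e2]
      have e3 : ∑ ω, p ω * (if x ∈ B ω then (1:ℝ) else 0)
          = ∑ ω ∈ Finset.univ.filter (fun ω => x ∈ B ω), p ω := by
        rw [Finset.sum_filter]
        refine Finset.sum_congr rfl ?_
        intro ω _
        by_cases hx : x ∈ B ω <;> simp [hx]
      rw [e3]
      exact hmarg x
  -- continuity
  have hwc : ∀ w : Finset N → ℝ,
      Continuous (fun μ : Finset N → ℝ => ∑ S : Finset N, μ S * w S) :=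
    fun w => continuous_finset_sum _ fun S _ => (continuous_apply S).mul continuous_const
  have hfc : Continuous f := hwc h
  have hgc : Continuous g := hwc _
  -- K compact
  have hKclosed : IsClosed K := by
    have : K = (⋂ S : Finset N, {μ : Finset N → ℝ | 0 ≤ μ S}) ∩
        ({μ : Finset N → ℝ | ∑ S : Finset N, μ S = 1} ∩
         ⋂ x : N, {μ : Finset N → ℝ | ∑ S : Finset N, μ S * (if x ∈ S then (1:ℝ) else 0) ≤ q}) := by
      ext μ
      simp only [hK, Set.mem_setOf_eq, Set.mem_inter_iff, Set.mem_iInter]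
    rw [this]
    refine (isClosed_iInter fun S => isClosed_le continuous_const (continuous_apply S)).inter
      ((isClosed_eq (continuous_finset_sum _ fun S _ => continuous_apply S) continuous_const).inter
        (isClosed_iInter fun x => isClosed_le (hwc _) continuous_const))
  have hKsub : K ⊆ Set.Icc (fun _ => (0:ℝ)) (fun _ => 1) := by
    rintro μ ⟨h1, h2, _⟩
    constructor
    · intro S; exact h1 S
    · intro S
      calc μ S ≤ ∑ T : Finset N, μ T :=
            Finset.single_le_sum (fun T _ => h1 T) (Finset.mem_univ S)
        _ = 1 := h2
  have hKcp : IsCompact K := IsCompact.of_isClosed_subset isCompact_Icc hKclosed hKsub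
  -- minimize f over K
  obtain ⟨ν1, hν1K, hν1min⟩ := hKcp.exists_isMinOn ⟨μ0, hμ0K⟩ hfc.continuousOn
  -- maximize g over minimizers
  set K' : Set (Finset N → ℝ) := K ∩ {μ | f μ ≤ f ν1} with hK'
  have hK'cp : IsCompact K' := hKcp.inter_right (isClosed_le hfc continuous_const)
  have hK'ne : K'.Nonempty := ⟨ν1, hν1K, by simp only [Set.mem_setOf_eq]; exact le_refl _⟩
  obtain ⟨ν, hνK', hνmax⟩ := hK'cp.exists_isMaxOn hK'ne hgc.continuousOn
  obtain ⟨⟨hνpos, hνsum, hνmarg⟩, hνf⟩ := hνK'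
  -- support of ν is a chain
  have chain : ∀ A C : Finset N, 0 < ν A → 0 < ν C → A ⊆ C ∨ C ⊆ A := by
    intro A C hA hC
    by_contra hcon
    push_neg at hcon
    obtain ⟨hAC, hCA⟩ := hcon
    have h1 : A ∪ C ≠ A := fun e => hCA (e ▸ Finset.subset_union_right)
    have h2 : A ∪ C ≠ C := fun e => hAC (e ▸ Finset.subset_union_left)
    have h3 : A ∩ C ≠ A := fun e => hAC (e ▸ Finset.inter_subset_right)
    have h4 : A ∩ C ≠ C := fun e => hCA (e ▸ Finset.inter_subset_left)
    set t := min (ν A) (ν C) with ht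
    have ht0 : 0 < t := lt_min hA hC
    set d : Finset N → ℝ := fun S =>
      (if S = A ∪ C then 1 else 0) + (if S = A ∩ C then 1 else 0)
        - (if S = A then 1 else 0) - (if S = C then 1 else 0) with hd
    set ν' : Finset N → ℝ := fun S => ν S + t * d S with hν'
    have hpoint : ∀ (T : Finset N) (w : Finset N → ℝ),
        ∑ S : Finset N, (if S = T then (1:ℝ) else 0) * w S = w T := by
      intro T w
      simp only [ite_mul, one_mul, zero_mul, Finset.sum_ite_eq', Finset.mem_univ, if_true]
    have key : ∀ w : Finset N → ℝ, ∑ S : Finset N, ν' S * w S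
        = (∑ S : Finset N, ν S * w S) + t * (w (A ∪ C) + w (A ∩ C) - w A - w C) := by
      intro w
      have e1 : ∀ S : Finset N, ν' S * w S = ν S * w S +
          t * ((if S = A ∪ C then (1:ℝ) else 0) * w S + (if S = A ∩ C then 1 else 0) * w S
            - (if S = A then 1 else 0) * w S - (if S = C then 1 else 0) * w S) := by
        intro S
        simp only [hν', hd]
        ring
      simp_rw [e1]
      rw [Finset.sum_add_distrib, ← Finset.mul_sum]
      congr 1
      rw [mul_eq_mul_left_iff]
      left
      rw [Finset.sum_sub_distrib, Finset.sum_sub_distrib, Finset.sum_add_distrib,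
        hpoint, hpoint, hpoint, hpoint]
    have hν'nonneg : ∀ S, 0 ≤ ν' S := by
      intro S
      rcases eq_or_ne S A with rfl | hSA
      · have : d S = -1 := by
          simp only [hd, if_neg (Ne.symm h1), if_neg (Ne.symm h3), if_pos rfl,
            if_neg (fun e : S = C => hAC (e ▸ Finset.Subset.refl S))]
          norm_num
        simp only [hν', this]
        have := min_le_left (ν S) (ν C)
        rw [← ht] at this
        linarith
      rcases eq_or_ne S C with rfl | hSC
      · have : d S = -1 := by
          simp only [hd, if_neg (Ne.symm h2), if_neg (Ne.symm h4), if_pos rfl, if_neg hSA]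
          norm_num
        simp only [hν', this]
        have := min_le_right (ν A) (ν S)
        rw [← ht] at this
        linarith
      · have hd0 : 0 ≤ d S := by
          simp only [hd, if_neg hSA, if_neg hSC, sub_zero]
          split_ifs <;> norm_num
        simp only [hν']
        have := mul_nonneg ht0.le hd0
        linarith [hνpos S]
    have hν'K : ν' ∈ K := by
      refine ⟨hν'nonneg, ?_, ?_⟩
      · have e := key (fun _ => (1:ℝ))
        simp only [mul_one] at e
        rw [e, hνsum]
        ring
      · intro x
        have e := key (fun S => if x ∈ S then (1:ℝ) else 0)
        rw [e]
        have e0 : (if x ∈ A ∪ C then (1:ℝ) else 0) + (if x ∈ A ∩ C then 1 else 0)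
            - (if x ∈ A then 1 else 0) - (if x ∈ C then 1 else 0) = 0 := by
          by_cases hxA : x ∈ A <;> by_cases hxC : x ∈ C <;>
            simp [Finset.mem_union, Finset.mem_inter, hxA, hxC]
        rw [e0, mul_zero, add_zero]
        exact hνmarg x
    have hν'f : f ν' ≤ f ν1 := by
      have e := key h
      have hs := hsub A C
      have : t * (h (A ∪ C) + h (A ∩ C) - h A - h C) ≤ 0 := by
        apply mul_nonpos_of_nonneg_of_nonpos ht0.le
        linarith
      calc f ν' = f ν + t * (h (A ∪ C) + h (A ∩ C) - h A - h C) := e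
        _ ≤ f ν := by linarith
        _ ≤ f ν1 := hνf
    have hν'K' : ν' ∈ K' := ⟨hν'K, hν'f⟩
    -- g strictly increases
    have hcard : ((A ∪ C).card : ℝ) + ((A ∩ C).card : ℝ) = (A.card : ℝ) + (C.card : ℝ) := by
      have := Finset.card_union_add_card_inter A C
      exact_mod_cast congrArg (Nat.cast : ℕ → ℝ) this
    have hcA : (A.card : ℝ) < ((A ∪ C).card : ℝ) := by
      have : A ⊂ A ∪ C := Finset.ssubset_iff_subset_ne.mpr ⟨Finset.subset_union_left, Ne.symm h1⟩
      exact_mod_cast Finset.card_lt_card this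
    have hcC : (C.card : ℝ) < ((A ∪ C).card : ℝ) := by
      have : C ⊂ A ∪ C := Finset.ssubset_iff_subset_ne.mpr ⟨Finset.subset_union_right, Ne.symm h2⟩
      exact_mod_cast Finset.card_lt_card this
    have hΔ : 0 < ((A ∪ C).card : ℝ)^2 + ((A ∩ C).card : ℝ)^2
        - (A.card : ℝ)^2 - (C.card : ℝ)^2 := by
      nlinarith [hcard, hcA, hcC]
    have e := key (fun S => ((S.card : ℝ))^2)
    have : g ν < g ν' := by
      rw [hg]
      simp only at e ⊢
      rw [e]
      nlinarith [mul_pos ht0 hΔ]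
    exact absurd (hνmax hν'K') (not_le.mpr this)
  -- probability of ∅ under ν is at least 1 - q
  have hνempty : 1 - q ≤ ν ∅ := by
    set T : Finset (Finset N) := Finset.univ.filter (fun S : Finset N => 0 < ν S ∧ S ≠ ∅) with hT
    rcases T.eq_empty_or_nonempty with hTe | hTne
    · have hz : ∀ S : Finset N, S ≠ ∅ → ν S = 0 := by
        intro S hS
        by_contra hc
        have hpos : 0 < ν S := lt_of_le_of_ne (hνpos S) (Ne.symm hc)
        have : S ∈ T := by simp [hT, hpos, hS]
        rw [hTe] at this
        simp at this
      have : ν ∅ = 1 := by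
        rw [← hνsum]
        rw [Finset.sum_eq_single ∅ (fun b _ hb => hz b hb)
          (fun hc => absurd (Finset.mem_univ ∅) hc)]
      linarith
    · obtain ⟨S0, hS0T, hS0min⟩ := T.exists_min_image (fun S => S.card) hTne
      simp only [hT, Finset.mem_filter, Finset.mem_univ, true_and] at hS0T
      obtain ⟨hS0pos, hS0ne⟩ := hS0T
      obtain ⟨u, hu⟩ := Finset.nonempty_iff_ne_empty.mpr hS0ne
      have hcontains : ∀ S : Finset N, 0 < ν S → S ≠ ∅ → u ∈ S := by
        intro S hSpos hSne
        have hST : S ∈ T := by simp [hT, hSpos, hSne]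
        rcases chain S0 S hS0pos hSpos with hsubs | hsubs
        · exact hsubs hu
        · have : S = S0 := Finset.eq_of_subset_of_card_le hsubs (hS0min S hST)
          rw [this]; exact hu
      have hlow : 1 - ν ∅ ≤ ∑ S : Finset N, ν S * (if u ∈ S then (1:ℝ) else 0) := by
        have hterm : ∀ S : Finset N,
            (if S = ∅ then 0 else ν S) ≤ ν S * (if u ∈ S then (1:ℝ) else 0) := by
          intro S
          rcases eq_or_ne S ∅ with rfl | hSne
          · simp
          · rcases (hνpos S).eq_or_lt with he | hlt
            · rw [if_neg hSne, ← he]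
              simp [← he]
            · rw [if_neg hSne, if_pos (hcontains S hlt hSne), mul_one]
        have e1 : ∑ S : Finset N, (if S = ∅ then (0:ℝ) else ν S)
            = (∑ S : Finset N, ν S) - ν ∅ := by
          have : ∀ S : Finset N, (if S = ∅ then (0:ℝ) else ν S)
              = ν S - (if S = ∅ then ν S else 0) := by
            intro S; by_cases hS : S = ∅ <;> simp [hS]
          simp_rw [this]
          rw [Finset.sum_sub_distrib]
          congr 1
          rw [Finset.sum_ite_eq' Finset.univ ∅ ν]
          simp
        calc 1 - ν ∅ = ∑ S : Finset N, (if S = ∅ then (0:ℝ) else ν S) := by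
              rw [e1, hνsum]
          _ ≤ _ := Finset.sum_le_sum fun S _ => hterm S
      linarith [hνmarg u]
  -- conclude
  have hfν : (1 - q) * h ∅ ≤ f ν := by
    have e1 : ν ∅ * h ∅ ≤ f ν := by
      rw [hf]
      exact Finset.single_le_sum (f := fun S => ν S * h S)
        (fun S _ => mul_nonneg (hνpos S) (hnonneg S)) (Finset.mem_univ ∅)
    have e2 : (1 - q) * h ∅ ≤ ν ∅ * h ∅ :=
      mul_le_mul_of_nonneg_right hνempty (hnonneg ∅)
    linarith
  have emain : ∑ ω, p ω * h (B ω) = f μ0 := (fib h).symm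
  have hmin : f ν1 ≤ f μ0 := hν1min hμ0K
  have hνf' : f ν ≤ f ν1 := hνf
  rw [ge_iff_le, emain]
  linarith
end

section
/- For a submodular function f with f(∅) ≥ 0, any sets S, T ⊆ E, and the dual assignment λ_e := f(e:S) for e ∉ S and λ_e := 0 for e ∈ S, μ := f(S), one has μ + ∑_{e ∈ T} λ_e ≥ f(S ∪ T). -/
/-- Prefix-marginal `f(e:S)` with respect to a fixed linear order. -/
noncomputable def prefixMarginal {E : Type*} [LinearOrder E]
    (f : Finset E → ℝ) (S : Finset E) (e : E) : ℝ :=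
  f (insert e (S.filter (fun e' => e' < e))) - f (S.filter (fun e' => e' < e))

theorem stmt5 {E : Type*} [Fintype E] [LinearOrder E] (f : Finset E → ℝ)
    (hsub : ∀ A B : Finset E, f A + f B ≥ f (A ∪ B) + f (A ∩ B))
    (hempty : f ∅ ≥ 0)
    (S T : Finset E) :
    f S + ∑ e ∈ T, (if e ∈ S then 0 else prefixMarginal f S e) ≥ f (S ∪ T) := by
  classical
  induction T using Finset.induction_on with
  | empty => simp
  | @insert a T' ha ih =>
    rw [Finset.sum_insert ha]
    by_cases haS : a ∈ S
    · have hST : S ∪ insert a T' = S ∪ T' := by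
        ext x; simp
        rintro rfl; exact Or.inl haS
      rw [hST]
      simp only [haS, if_true]
      linarith
    · have hU : insert a (S.filter (fun e' => e' < a)) ∪ (S ∪ T') = S ∪ insert a T' := by
        ext x; simp [Finset.mem_filter]; tauto
      have hI : insert a (S.filter (fun e' => e' < a)) ∩ (S ∪ T') = S.filter (fun e' => e' < a) := by
        ext x; simp only [Finset.mem_inter, Finset.mem_insert, Finset.mem_filter, Finset.mem_union]
        constructor
        · rintro ⟨h1 | ⟨h1, h2⟩, h3⟩
          · subst h1; tauto
          · exact ⟨h1, h2⟩
        · tauto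
      have key := hsub (insert a (S.filter (fun e' => e' < a))) (S ∪ T')
      rw [hU, hI] at key
      simp only [haS, if_false, prefixMarginal]
      simp only [prefixMarginal] at ih
      linarith
end
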